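/- arXiv:2502.08401 — 6 statements merged into one kernel-verified Lean document; each statement's English description precedes it below -/
import Mathlib

section
/- Let A be a set, X a rack, and f : A → X any map. Then there exists a unique rack homomorphism g : FR(A) → X such that g(ι(a)) = f(a) for all a ∈ A, where ι : A → FR(A) is the map a ↦ (1, a) (here 1 denotes the identity element of the free group F(A)). That is, the free rack FR(A) satisfies the universal property of the free rack on A. -/
/-- The free rack operation on `FreeGroup A × A`:
`(u, a) ▷ (v, b) = (u * a * u⁻¹ * v, b)`. -/
def freeRackOp (A : Type*) : FreeGroup A × A → FreeGroup A × A → FreeGroup A × A :=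
  fun p q => (p.1 * FreeGroup.of p.2 * p.1⁻¹ * q.1, q.2)

/-!
The free group `F(A)` acts on a rack `X` through `a ↦ (x ↦ f a ▷ x)`; by left
self-distributivity each generator, hence every element, acts by a rack automorphism. The
homomorphism is `g (u, a) = u • f a`, and conversely the equation
`g ((1, a) ▷ (v, b)) = f a ▷ g (v, b)` forces every homomorphism extending `f` to satisfy
`g (u * v, b) = u • g (v, b)`, hence to be this one.
-/

section RackAut

variable {X : Type*} (op : X → X → X)

def rackAutGroup : Subgroup (Equiv.Perm X) where
  carrier := {σ | ∀ y z, σ (op y z) = op (σ y) (σ z)}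
  one_mem' _ _ := rfl
  mul_mem' {σ τ} hσ hτ y z := (congrArg σ (hτ y z)).trans (hσ _ _)
  inv_mem' {σ} hσ y z := by
    rw [Equiv.Perm.inv_eq_iff_eq, hσ]
    simp only [Equiv.Perm.inv_def, Equiv.apply_symm_apply]

variable {op} (hbij : ∀ a c : X, ∃! b : X, op a b = c)

noncomputable def rackLeftPerm (a : X) : Equiv.Perm X :=
  Equiv.ofBijective (op a) ((Function.bijective_iff_existsUnique _).mpr (hbij a))

theorem rackLeftPerm_apply (a x : X) : rackLeftPerm hbij a x = op a x :=
  rfl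

theorem rackLeftPerm_mem_rackAutGroup
    (hdist : ∀ a b c : X, op a (op b c) = op (op a b) (op a c)) (a : X) :
    rackLeftPerm hbij a ∈ rackAutGroup op :=
  hdist a

end RackAut

section FreeRackLift

variable {A X : Type*} {op : X → X → X} (hbij : ∀ a c : X, ∃! b : X, op a b = c)

noncomputable def freeRackAction (f : A → X) :
    FreeGroup A →* Equiv.Perm X :=
  FreeGroup.lift fun a => rackLeftPerm hbij (f a)

theorem freeRackAction_of (f : A → X) (a : A) (x : X) :
    freeRackAction hbij f (FreeGroup.of a) x = op (f a) x := by
  rw [freeRackAction, FreeGroup.lift_apply_of, rackLeftPerm_apply]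

theorem freeRackAction_mem_rackAutGroup
    (hdist : ∀ a b c : X, op a (op b c) = op (op a b) (op a c)) (f : A → X) (u : FreeGroup A) :
    freeRackAction hbij f u ∈ rackAutGroup op :=
  FreeGroup.range_lift_le
    (Set.range_subset_iff.mpr fun a => rackLeftPerm_mem_rackAutGroup hbij hdist (f a)) ⟨u, rfl⟩

noncomputable def freeRackLift (f : A → X) :
    FreeGroup A × A → X :=
  fun p => freeRackAction hbij f p.1 (f p.2)

theorem freeRackLift_one (f : A → X) (a : A) :
    freeRackLift hbij f (1, a) = f a := by
  simp [freeRackLift]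

theorem freeRackLift_freeRackOp
    (hdist : ∀ a b c : X, op a (op b c) = op (op a b) (op a c)) (f : A → X)
    (p q : FreeGroup A × A) :
    freeRackLift hbij f (freeRackOp A p q) =
      op (freeRackLift hbij f p) (freeRackLift hbij f q) := by
  obtain ⟨u, a⟩ := p
  obtain ⟨v, b⟩ := q
  set σ := freeRackAction hbij f
  calc σ (u * FreeGroup.of a * u⁻¹ * v) (f b)
      = σ u (op (f a) ((σ u)⁻¹ (σ v (f b)))) := by
        simp only [map_mul, map_inv, Equiv.Perm.mul_apply, σ, freeRackAction_of]
    _ = op (σ u (f a)) (σ v (f b)) := by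
        rw [freeRackAction_mem_rackAutGroup hbij hdist f u, Equiv.Perm.inv_def,
          Equiv.apply_symm_apply]

theorem apply_mul_eq_freeRackAction {g : FreeGroup A × A → X} (hg : ∀ p q, g (freeRackOp A p q) = op (g p) (g q))
    (u v : FreeGroup A) (b : A) :
    g (u * v, b) = freeRackAction hbij (fun a => g (1, a)) u (g (v, b)) := by
  set σ := freeRackAction hbij fun a => g (1, a)
  have of_mul : ∀ a v, g (FreeGroup.of a * v, b) = σ (FreeGroup.of a) (g (v, b)) := by
    intro a v
    rw [freeRackAction_of, ← hg]
    simp [freeRackOp]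
  induction u using FreeGroup.induction_on generalizing v with
  | C1 => simp
  | of a => exact of_mul a v
  | inv_of a _ =>
    rw [map_inv, Equiv.Perm.eq_inv_iff_eq, ← of_mul, mul_inv_cancel_left]
  | mul u w ihu ihw =>
    rw [mul_assoc, ihu, ihw, map_mul, Equiv.Perm.mul_apply]

theorem eq_freeRackLift {g : FreeGroup A × A → X}
    (hg : ∀ p q, g (freeRackOp A p q) = op (g p) (g q)) :
    g = freeRackLift hbij fun a => g (1, a) := by
  funext ⟨u, b⟩
  simpa [freeRackLift] using apply_mul_eq_freeRackAction hbij hg u 1 b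

end FreeRackLift

/-- Universal property of the free rack: for any rack `(X, op)` and any map
`f : A → X` there is a unique rack homomorphism `g : FR(A) → X` with
`g (1, a) = f a` for all `a ∈ A`. -/
theorem stmt_2 {A X : Type*} (op : X → X → X)
    (hdist : ∀ a b c : X, op a (op b c) = op (op a b) (op a c))
    (hbij : ∀ a c : X, ∃! b : X, op a b = c)
    (f : A → X) :
    ∃! g : FreeGroup A × A → X,
      (∀ p q : FreeGroup A × A, g (freeRackOp A p q) = op (g p) (g q)) ∧
      (∀ a : A, g (1, a) = f a) := by
  refine ⟨freeRackLift hbij f,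
    ⟨freeRackLift_freeRackOp hbij hdist f, freeRackLift_one hbij f⟩, ?_⟩
  rintro g ⟨hg, hgf⟩
  rw [eq_freeRackLift hbij hg, funext hgf]
end

section
/- Let A be a set and F(A) the free group on A. For any u, v ∈ F(A) and any generators a, b ∈ A, the equality u*a*u⁻¹ = v*b*v⁻¹ holds in F(A) if and only if a = b and u⁻¹*v lies in the cyclic subgroup of F(A) generated by a. Consequently, the map (u, a) ↦ u*a*u⁻¹ from F(A) × A to F(A) identifies exactly those pairs (u, a) and (v, b) that are related by the quandle equivalence generated by (w, a) ∼ (w*a, a), so the induced map from the free quandle FQ(A) into the conjugation rack of F(A) is injective. -/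
/-!
Abelianizing `u a u⁻¹ = v b v⁻¹` gives `a = b`, and then `v⁻¹ u` commutes with the generator `a`.
An element `w` commuting with `a` must have reduced word starting with `a^{±1}`: otherwise `a w`
is reduced of length `|w| + 1`, while the reduced word of `w a` is a sublist of `w ++ [a]`, so
the two would be equal as words, forcing `w` to start with `a` after all. Peeling off that letter
shows `w` is a power of `a`. For the quandle statement, the relation `(w, a) ∼ (w a, a)` generates
exactly the moves `(w, a) ↦ (w aᵏ, a)`, which are the fibres of `(u, a) ↦ u a u⁻¹` by the first
part.
-/
/-- The generating relation of the free quandle as a quotient of the free rack: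
`(w, a) ∼ (w * a, a)`. -/
def quandleRel (A : Type*) : FreeGroup A × A → FreeGroup A × A → Prop :=
  fun p q => q = (p.1 * FreeGroup.of p.2, p.2)

namespace FreeGroup

variable {α : Type*}

theorem eq_of_isConj_of {a b : α} (h : IsConj (of a) (of b)) : a = b :=
  FreeAbelianGroup.of_injective <|
    congrArg Additive.ofMul (isConj_iff_eq.mp (Abelianization.of.map_isConj h))

theorem mk_singleton_mem_zpowers_of (a : α) (b : Bool) :
    mk [(a, b)] ∈ Subgroup.zpowers (of a) := by
  cases b
  · exact inv_mem (x := of a) (Subgroup.mem_zpowers _)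
  · exact Subgroup.mem_zpowers (of a)

section DecidableEq

variable [DecidableEq α]

theorem toWord_of_mul {a : α} {w : FreeGroup α} (h : ∀ x ∈ w.toWord.head?, x.1 ≠ a) :
    (of a * w).toWord = (a, true) :: w.toWord := by
  rw [toWord_mul, toWord_of, List.singleton_append, reduce.cons, reduce_toWord]
  rcases hw : w.toWord with _ | ⟨x, t⟩
  · rfl
  · have hx : x.1 ≠ a := h x (by simp [hw])
    exact if_neg fun hc => hx hc.1.symm

theorem fst_eq_of_commute_of {a : α} {w : FreeGroup α} (hw : Commute w (of a))
    {x : α × Bool} (hx : w.toWord.head? = some x) : x.1 = a := by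
  by_contra hxa
  obtain ⟨t, ht⟩ := List.head?_eq_some_iff.mp hx
  have hleft : (of a * w).toWord = (a, true) :: x :: t := by
    rw [toWord_of_mul (by simpa [ht] using hxa), ht]
  have hright := (toWord_mul_sublist w (of a)).eq_of_length
  rw [hw.eq, hleft, toWord_of, ht] at hright
  have hx' : (a, true) = x := by simpa using congrArg List.head? (hright (by simp))
  exact hxa (by rw [← hx'])

end DecidableEq

theorem mem_zpowers_of_of_commute {a : α} {w : FreeGroup α} (hw : Commute w (of a)) :
    w ∈ Subgroup.zpowers (of a) := by
  classical
  induction hL : w.toWord generalizing w with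
  | nil => simp [toWord_eq_nil_iff.mp hL]
  | cons x t ih =>
    obtain ⟨a', b⟩ := x
    obtain rfl : a' = a := fst_eq_of_commute_of hw (x := (a', b)) (by simp [hL])
    have hsplit : w = mk [(a', b)] * mk t := by
      rw [mul_mk, List.singleton_append, ← hL, mk_toWord]
    have hhead := mk_singleton_mem_zpowers_of a' b
    have htail : mk t ∈ Subgroup.zpowers (of a') := by
      refine ih ?_ ?_
      · obtain ⟨k, hk⟩ := hhead
        rw [show mk t = (mk [(a', b)])⁻¹ * w by rw [hsplit, inv_mul_cancel_left], ← hk]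
        exact ((Commute.refl _).zpow_left k).inv_left.mul_left hw
      · have hred : IsReduced ((a', b) :: t) := hL ▸ isReduced_toWord
        rw [toWord_mk, (hred.infix (List.suffix_cons _ _).isInfix).reduce_eq]
    rw [hsplit]
    exact mul_mem hhead htail

theorem conj_of_eq_conj_of_iff {u v : FreeGroup α} {a b : α} :
    u * of a * u⁻¹ = v * of b * v⁻¹ ↔ a = b ∧ u⁻¹ * v ∈ Subgroup.zpowers (of a) := by
  constructor
  · intro h
    have hconj : (v⁻¹ * u) * of a * (v⁻¹ * u)⁻¹ = of b := by
      calc _ = v⁻¹ * (u * of a * u⁻¹) * v := by group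
        _ = of b := by rw [h]; group
    obtain rfl := eq_of_isConj_of (isConj_iff.mpr ⟨_, hconj⟩)
    have hcomm : Commute (v⁻¹ * u) (of a) := mul_inv_eq_iff_eq_mul.mp hconj
    simpa using inv_mem (mem_zpowers_of_of_commute hcomm)
  · rintro ⟨rfl, hv⟩
    obtain ⟨k, hk⟩ := Subgroup.mem_zpowers_iff.mp hv
    rw [eq_mul_of_inv_mul_eq hk.symm]
    group

end FreeGroup

open FreeGroup

section FreeQuandle

variable {A : Type*}

theorem quot_mk_mul_of (w : FreeGroup A) (a : A) :
    Quot.mk (quandleRel A) (w * of a, a) = Quot.mk (quandleRel A) (w, a) :=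
  (Quot.sound (r := quandleRel A) (a := (w, a)) rfl).symm

theorem quot_mk_mul_of_zpow (w : FreeGroup A) (a : A) (k : ℤ) :
    Quot.mk (quandleRel A) (w * of a ^ k, a) = Quot.mk (quandleRel A) (w, a) := by
  induction k using Int.induction_on with
  | zero => simp
  | succ n ih => rw [zpow_add_one, ← mul_assoc, quot_mk_mul_of, ih]
  | pred n ih =>
    rw [← ih, ← quot_mk_mul_of (w * of a ^ (-(n : ℤ) - 1)), mul_assoc, ← zpow_add_one,
      sub_add_cancel]

theorem quot_mk_eq_iff_conj_eq (p q : FreeGroup A × A) :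
    Quot.mk (quandleRel A) p = Quot.mk (quandleRel A) q ↔
      p.1 * of p.2 * p.1⁻¹ = q.1 * of q.2 * q.1⁻¹ := by
  constructor
  · exact congrArg <| Quot.lift (fun p : FreeGroup A × A => p.1 * of p.2 * p.1⁻¹) <| by
      rintro p _ rfl
      group
  · obtain ⟨u, a⟩ := p
    obtain ⟨v, b⟩ := q
    intro h
    obtain ⟨rfl, hv⟩ := conj_of_eq_conj_of_iff.mp h
    obtain ⟨k, hk⟩ := Subgroup.mem_zpowers_iff.mp hv
    rw [← quot_mk_mul_of_zpow u a k, hk, mul_inv_cancel_left]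

end FreeQuandle

/-- In the free group, `u*a*u⁻¹ = v*b*v⁻¹` iff `a = b` and `u⁻¹*v ∈ ⟨a⟩`.
Consequently the map `(u, a) ↦ u*a*u⁻¹` identifies exactly pairs related by the
equivalence generated by `(w, a) ∼ (w*a, a)`, so the induced map from the free
quandle `FQ(A)` into the conjugation rack of `F(A)` is injective. -/
theorem stmt_3 (A : Type*) :
    (∀ (u v : FreeGroup A) (a b : A),
      u * FreeGroup.of a * u⁻¹ = v * FreeGroup.of b * v⁻¹ ↔
        a = b ∧ u⁻¹ * v ∈ Subgroup.zpowers (FreeGroup.of a)) ∧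
    (∀ p q : FreeGroup A × A,
      p.1 * FreeGroup.of p.2 * p.1⁻¹ = q.1 * FreeGroup.of q.2 * q.1⁻¹ ↔
        Relation.EqvGen (quandleRel A) p q) ∧
    (∀ p q : FreeGroup A × A,
      Quot.mk (quandleRel A) p = Quot.mk (quandleRel A) q ↔
        p.1 * FreeGroup.of p.2 * p.1⁻¹ = q.1 * FreeGroup.of q.2 * q.1⁻¹) :=
  ⟨fun _ _ _ _ => conj_of_eq_conj_of_iff,
    fun p q => (quot_mk_eq_iff_conj_eq p q).symm.trans Quot.eq,
    quot_mk_eq_iff_conj_eq⟩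
end

section
/- Let X and Y be racks, let f : X → Y be a surjective rack homomorphism, and suppose Y is connected, i.e., the natural action on Y of the group Inn(Y) generated by the left multiplications φ_y (y ∈ Y) is transitive. Then all fibers of f have the same cardinality: for all y₁, y₂ ∈ Y there is a bijection between f⁻¹(y₁) and f⁻¹(y₂). -/
/-- If `f : X → Y` is a surjective rack homomorphism and `Y` is connected
(the action of `Inn(Y) = ⟨φ_y : y ∈ Y⟩ ≤ Sym(Y)` on `Y` is transitive), then
all fibers of `f` have the same cardinality. -/
theorem stmt_8 {X Y : Type*} (opX : X → X → X) (opY : Y → Y → Y)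
    (hdistX : ∀ a b c : X, opX a (opX b c) = opX (opX a b) (opX a c))
    (hbijX : ∀ a : X, Function.Bijective (opX a))
    (hdistY : ∀ a b c : Y, opY a (opY b c) = opY (opY a b) (opY a c))
    (φ : Y → Equiv.Perm Y) (hφ : ∀ a b : Y, φ a b = opY a b)
    (hconn : ∀ y z : Y, ∃ σ ∈ Subgroup.closure (Set.range φ), σ y = z)
    (f : X → Y) (hsurj : Function.Surjective f)
    (hhom : ∀ x₁ x₂ : X, f (opX x₁ x₂) = opY (f x₁) (f x₂)) :
    ∀ y₁ y₂ : Y, Nonempty ((f ⁻¹' {y₁}) ≃ (f ⁻¹' {y₂})) := by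
  -- the subgroup of permutations of Y that lift to permutations of X
  set S : Subgroup (Equiv.Perm Y) :=
    { carrier := {σ | ∃ τ : Equiv.Perm X, ∀ x, f (τ x) = σ (f x)}
      one_mem' := ⟨Equiv.refl X, fun x => rfl⟩
      mul_mem' := by
        rintro σ₂ σ₁ ⟨τ₂, h₂⟩ ⟨τ₁, h₁⟩
        exact ⟨τ₁.trans τ₂, fun x => by simp [h₂, h₁]⟩
      inv_mem' := by
        rintro σ ⟨τ, h⟩
        refine ⟨τ.symm, fun x => ?_⟩
        have := h (τ.symm x)
        simp at this
        simp [this]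
       } with hS
  have hle : Subgroup.closure (Set.range φ) ≤ S := by
    rw [Subgroup.closure_le]
    rintro _ ⟨y, rfl⟩
    obtain ⟨x, rfl⟩ := hsurj y
    exact ⟨Equiv.ofBijective _ (hbijX x), fun x' => by
      simp [Equiv.ofBijective, hhom, hφ]⟩
  intro y₁ y₂
  obtain ⟨σ, hσS, hσ⟩ := hconn y₁ y₂
  obtain ⟨τ, hτ⟩ := hle hσS
  exact ⟨Equiv.subtypeEquiv τ (fun x => by
    constructor
    · rintro (h : f x = y₁)
      show f (τ x) = y₂
      rw [hτ, h, hσ]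
    · rintro (h : f (τ x) = y₂)
      show f x = y₁
      rw [hτ] at h
      exact σ.injective (by rw [h, hσ]))⟩
end

section
/- Let Y be a rack, F a set, and let α be a family of functions α_{y₁y₂} : F × F → F indexed by pairs (y₁, y₂) ∈ Y × Y. Suppose that (i) for every y₁, y₂ ∈ Y and i ∈ F, the map α_{y₁y₂}(i, ·) : F → F is a bijection, and (ii) for every y₁, y₂, y₃ ∈ Y and i, j, k ∈ F, the equality α_{y₁, φ_{y₂}(y₃)}(i, α_{y₂y₃}(j, k)) = α_{φ_{y₁}(y₂), φ_{y₁}(y₃)}(α_{y₁y₂}(i, j), α_{y₁y₃}(i, k)) holds, where φ_y(z) = y ▷ z. Then the set Y × F with the operation (y₁, i) ▷ (y₂, j) = (y₁ ▷ y₂, α_{y₁y₂}(i, j)) is a rack: the operation is left self-distributive and each left multiplication is a bijection of Y × F. -/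
/-- The extension operation on `Y × F` determined by a rack operation on `Y`
and a family `α` of maps `F × F → F`:
`(y₁, i) ▷ (y₂, j) = (y₁ ▷ y₂, α_{y₁y₂}(i, j))`. -/
def extOp {Y F : Type*} (opY : Y → Y → Y) (α : Y → Y → F → F → F) :
    Y × F → Y × F → Y × F :=
  fun p q => (opY p.1 q.1, α p.1 q.1 p.2 q.2)

/-- If `α` satisfies the two extension conditions, then `Y × F` with the
operation `(y₁, i) ▷ (y₂, j) = (y₁ ▷ y₂, α_{y₁y₂}(i, j))` is a rack. -/
theorem stmt_9 {Y F : Type*} (opY : Y → Y → Y)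
    (hdistY : ∀ a b c : Y, opY a (opY b c) = opY (opY a b) (opY a c))
    (hbijY : ∀ a : Y, Function.Bijective (opY a))
    (α : Y → Y → F → F → F)
    (h1 : ∀ (y₁ y₂ : Y) (i : F), Function.Bijective (α y₁ y₂ i))
    (h2 : ∀ (y₁ y₂ y₃ : Y) (i j k : F),
      α y₁ (opY y₂ y₃) i (α y₂ y₃ j k) =
        α (opY y₁ y₂) (opY y₁ y₃) (α y₁ y₂ i j) (α y₁ y₃ i k)) :
    (∀ p q r : Y × F,
      extOp opY α p (extOp opY α q r) =
        extOp opY α (extOp opY α p q) (extOp opY α p r)) ∧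
    (∀ p : Y × F, Function.Bijective (extOp opY α p)) := by
  constructor
  · intro p q r
    simp only [extOp, Prod.mk.injEq]
    exact ⟨hdistY _ _ _, h2 _ _ _ _ _ _⟩
  · intro p
    constructor
    · intro q r h
      simp only [extOp, Prod.mk.injEq] at h
      have h1' : q.1 = r.1 := (hbijY p.1).1 h.1
      have h2' : q.2 = r.2 := (h1 p.1 q.1 p.2).1 (h1' ▸ h.2)
      exact Prod.ext h1' h2'
    · intro z
      obtain ⟨y, hy⟩ := (hbijY p.1).2 z.1
      obtain ⟨f, hf⟩ := (h1 p.1 y p.2).2 z.2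
      exact ⟨(y, f), Prod.ext hy hf⟩
end

section
/- Let Y be a quandle, F a set, and α a family of functions α_{y₁y₂} : F × F → F indexed by pairs of elements of Y satisfying: (i) α_{y₁y₂}(i, ·) : F → F is a bijection for all y₁, y₂ ∈ Y and i ∈ F; (ii) α_{y₁, φ_{y₂}(y₃)}(i, α_{y₂y₃}(j, k)) = α_{φ_{y₁}(y₂), φ_{y₁}(y₃)}(α_{y₁y₂}(i, j), α_{y₁y₃}(i, k)) for all y₁, y₂, y₃ ∈ Y and i, j, k ∈ F; and (iii) α_{yy}(i, i) = i for all y ∈ Y and i ∈ F. Then Y × F with the operation (y₁, i) ▷ (y₂, j) = (y₁ ▷ y₂, α_{y₁y₂}(i, j)) is a quandle: it is a rack and additionally (y, i) ▷ (y, i) = (y, i) for all (y, i) ∈ Y × F. -/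
/-- If `Y` is a quandle and `α` satisfies the two extension conditions together
with `α_{yy}(i, i) = i`, then `Y × F` with the extension operation is a quandle. -/
theorem stmt_10 {Y F : Type*} (opY : Y → Y → Y)
    (hdistY : ∀ a b c : Y, opY a (opY b c) = opY (opY a b) (opY a c))
    (hbijY : ∀ a : Y, Function.Bijective (opY a))
    (hidemY : ∀ a : Y, opY a a = a)
    (α : Y → Y → F → F → F)
    (h1 : ∀ (y₁ y₂ : Y) (i : F), Function.Bijective (α y₁ y₂ i))
    (h2 : ∀ (y₁ y₂ y₃ : Y) (i j k : F),
      α y₁ (opY y₂ y₃) i (α y₂ y₃ j k) =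
        α (opY y₁ y₂) (opY y₁ y₃) (α y₁ y₂ i j) (α y₁ y₃ i k))
    (h3 : ∀ (y : Y) (i : F), α y y i i = i) :
    (∀ p q r : Y × F,
      extOp opY α p (extOp opY α q r) =
        extOp opY α (extOp opY α p q) (extOp opY α p r)) ∧
    (∀ p : Y × F, Function.Bijective (extOp opY α p)) ∧
    (∀ p : Y × F, extOp opY α p p = p) := by
  refine ⟨?_, ?_, ?_⟩
  · rintro ⟨a, i⟩ ⟨b, j⟩ ⟨c, k⟩
    simp only [extOp, Prod.mk.injEq]
    exact ⟨hdistY a b c, h2 a b c i j k⟩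
  · rintro ⟨a, i⟩
    constructor
    · rintro ⟨b, j⟩ ⟨c, k⟩ h
      simp only [extOp, Prod.mk.injEq] at h
      obtain ⟨h4, h5⟩ := h
      have hb : b = c := (hbijY a).1 h4
      subst hb
      exact Prod.ext rfl ((h1 a b i).1 h5)
    · rintro ⟨b, j⟩
      obtain ⟨c, hc⟩ := (hbijY a).2 b
      obtain ⟨k, hk⟩ := (h1 a c i).2 j
      exact ⟨(c, k), Prod.ext hc hk⟩
  · rintro ⟨a, i⟩
    exact Prod.ext (hidemY a) (h3 a i)
end

section
/- Let X and Y be racks and let f : X → Y be a surjective rack homomorphism such that all fibers f⁻¹(y), y ∈ Y, have the same cardinality. Then X is an extension of Y: there exist a set F, a family of functions α_{y₁y₂} : F × F → F (indexed by pairs of elements of Y) satisfying the extension conditions (each α_{y₁y₂}(i, ·) is a bijection of F, and α_{y₁, φ_{y₂}(y₃)}(i, α_{y₂y₃}(j, k)) = α_{φ_{y₁}(y₂), φ_{y₁}(y₃)}(α_{y₁y₂}(i, j), α_{y₁y₃}(i, k)) for all y₁, y₂, y₃ ∈ Y and i, j, k ∈ F), and a bijection e : X → Y × F such that the first component of e(x)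 equals f(x) for all x ∈ X, and e is a rack isomorphism from X to the rack Y ×_α F with operation (y₁, i) ▷ (y₂, j) = (y₁ ▷ y₂, α_{y₁y₂}(i, j)). -/
/-- If `f : X → Y` is a surjective rack homomorphism all of whose fibers have
the same cardinality, then `X` is an extension `Y ×_α F` of `Y`: there are a
set `F` and a family `α` satisfying the extension conditions, and a bijection
`e : X ≃ Y × F` over `f` which is a rack isomorphism onto `Y ×_α F`. -/
theorem stmt_11 {X Y : Type u} (opX : X → X → X) (opY : Y → Y → Y)
    (hdistX : ∀ a b c : X, opX a (opX b c) = opX (opX a b) (opX a c))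
    (hbijX : ∀ a : X, Function.Bijective (opX a))
    (hdistY : ∀ a b c : Y, opY a (opY b c) = opY (opY a b) (opY a c))
    (hbijY : ∀ a : Y, Function.Bijective (opY a))
    (f : X → Y) (hsurj : Function.Surjective f)
    (hhom : ∀ x₁ x₂ : X, f (opX x₁ x₂) = opY (f x₁) (f x₂))
    (hfib : ∀ y₁ y₂ : Y, Nonempty ((f ⁻¹' {y₁}) ≃ (f ⁻¹' {y₂}))) :
    ∃ (F : Type u) (α : Y → Y → F → F → F),
      (∀ (y₁ y₂ : Y) (i : F), Function.Bijective (α y₁ y₂ i)) ∧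
      (∀ (y₁ y₂ y₃ : Y) (i j k : F),
        α y₁ (opY y₂ y₃) i (α y₂ y₃ j k) =
          α (opY y₁ y₂) (opY y₁ y₃) (α y₁ y₂ i j) (α y₁ y₃ i k)) ∧
      ∃ e : X ≃ Y × F,
        (∀ x : X, (e x).1 = f x) ∧
        (∀ x₁ x₂ : X, e (opX x₁ x₂) = extOp opY α (e x₁) (e x₂)) := by
  classical
  by_cases hY : Nonempty Y
  case neg =>
    -- Y empty, hence X empty
    have hXe : IsEmpty X := ⟨fun x => hY ⟨f x⟩⟩
    have hYe : IsEmpty Y := not_nonempty_iff.mp hY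
    refine ⟨PUnit, fun _ _ _ _ => PUnit.unit, ?_, ?_, ?_⟩
    · intro y₁; exact (hYe.false y₁).elim
    · intro y₁; exact (hYe.false y₁).elim
    · refine ⟨Equiv.equivOfIsEmpty X (Y × PUnit), ?_, ?_⟩
      · intro x; exact (hXe.false x).elim
      · intro x; exact (hXe.false x).elim
  case pos =>
  obtain ⟨y₀⟩ := hY
  set F := (f ⁻¹' {y₀} : Set X) with hF
  have g : ∀ y : Y, (F : Type u) ≃ (f ⁻¹' {y}) := fun y => (hfib y₀ y).some
  have mem : ∀ (y : Y) (i : F), f ((g y i : X)) = y := fun y i => (g y i).2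
  have memop : ∀ (y₁ y₂ : Y) (a b : X), f a = y₁ → f b = y₂ →
      opX a b ∈ f ⁻¹' {opY y₁ y₂} := by
    intro y₁ y₂ a b ha hb
    simp [Set.mem_preimage, hhom, ha, hb]
  -- the cocycle
  set α : Y → Y → F → F → F := fun y₁ y₂ i j => (g (opY y₁ y₂)).symm
      ⟨opX (g y₁ i) (g y₂ j), memop _ _ _ _ (mem _ _) (mem _ _)⟩ with hα
  -- key unfolding lemma
  have key : ∀ (y₁ y₂ : Y) (i j : F),
      ((g (opY y₁ y₂) (α y₁ y₂ i j) : X)) = opX (g y₁ i) (g y₂ j) := by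
    intro y₁ y₂ i j
    rw [hα]
    simp [Equiv.apply_symm_apply]
  -- independence helper: symm at (f x) equals symm at y when f x = y
  have gsym : ∀ (y y' : Y), y = y' → ∀ (x : X) (h : x ∈ f ⁻¹' {y}) (h' : x ∈ f ⁻¹' {y'}),
      (g y).symm ⟨x, h⟩ = (g y').symm ⟨x, h'⟩ := by
    rintro y y' rfl x h h'; rfl
  have indep : ∀ (x : X) (y : Y) (h : f x = y),
      (g (f x)).symm ⟨x, rfl⟩ = (g y).symm ⟨x, h⟩ := by
    intro x y h; subst h; rfl
  refine ⟨F, α, ?_, ?_, ?_⟩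
  · -- bijectivity
    intro y₁ y₂ i
    constructor
    · intro j j' h
      have h2 := congrArg (fun t => ((g (opY y₁ y₂) t : X))) h
      simp only [key] at h2
      have h3 : (g y₂ j : X) = (g y₂ j' : X) := (hbijX _).1 h2
      exact (g y₂).injective (Subtype.ext h3)
    · intro k
      obtain ⟨b, hb⟩ := (hbijX (g y₁ i)).2 (g (opY y₁ y₂) k : X)
      have hfb : f b = y₂ := by
        have h1 : opY y₁ (f b) = opY y₁ y₂ := by
          have := hhom (g y₁ i) b
          rw [hb, mem, mem] at this
          exact this.symm
        exact (hbijY y₁).1 h1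
      refine ⟨(g y₂).symm ⟨b, hfb⟩, ?_⟩
      apply (g (opY y₁ y₂)).injective
      apply Subtype.ext
      rw [key]
      simp only [Equiv.apply_symm_apply]
      exact hb
  · -- cocycle condition
    intro y₁ y₂ y₃ i j k
    have pf : opX (g y₁ i : X) (g (opY y₂ y₃) (α y₂ y₃ j k) : X)
        ∈ f ⁻¹' {opY (opY y₁ y₂) (opY y₁ y₃)} := by
      simp [Set.mem_preimage, hhom, mem, ← hdistY]
    refine (gsym _ _ (hdistY y₁ y₂ y₃) _ (memop _ _ _ _ (mem _ _) (mem _ _)) pf).trans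
      (congrArg (g (opY (opY y₁ y₂) (opY y₁ y₃))).symm (Subtype.ext ?_))
    simp only [key]
    exact hdistX _ _ _
  · -- the equivalence
    refine ⟨⟨fun x => (f x, (g (f x)).symm ⟨x, rfl⟩),
             fun p => (g p.1 p.2 : X), ?_, ?_⟩, ?_, ?_⟩
    · intro x
      simp only
      have : ((g (f x)) ((g (f x)).symm ⟨x, rfl⟩) : X) = x := by
        rw [Equiv.apply_symm_apply]
      exact this
    · rintro ⟨y, i⟩
      have hy : f (g y i : X) = y := mem y i
      refine Prod.ext hy ?_
      simp only
      rw [indep _ _ hy]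
      have : (⟨(g y i : X), hy⟩ : (f ⁻¹' {y})) = g y i := Subtype.ext rfl
      rw [this, Equiv.symm_apply_apply]
    · intro x; rfl
    · intro x₁ x₂
      refine Prod.ext (hhom x₁ x₂) ?_
      show (g (f (opX x₁ x₂))).symm ⟨opX x₁ x₂, rfl⟩ = α (f x₁) (f x₂) _ _
      rw [indep _ _ (hhom x₁ x₂), hα]
      simp only
      congr 1
      apply Subtype.ext
      simp only [Equiv.coe_fn_mk, Equiv.apply_symm_apply]
end
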